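/- Let L = L_{-1} ⊕ L_0 ⊕ L_1 be a 3-graded Lie algebra and I an ideal of L. Let π_i denote the canonical projection of L onto L_i (i ∈ {-1, 0, 1}), let J = [[I, I], [I, I]], and let Ĩ = J + π_{-1}(J) + π_1(J). Then Ĩ is a graded ideal of L contained in I. -/

import Mathlib

/-- The canonical projection `π_i` onto the degree-`i` component of a graded module. -/
noncomputable def gproj {Φ : Type*} [CommRing Φ] {L : Type*} [AddCommGroup L] [Module Φ L]
    (𝒜 : ℤ → Submodule Φ L) [DirectSum.Decomposition 𝒜] (i : ℤ) : L →ₗ[Φ] L :=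
  (𝒜 i).subtype ∘ₗ (DirectSum.component Φ ℤ (fun j => ↥(𝒜 j)) i) ∘ₗ
    (DirectSum.decomposeLinearEquiv 𝒜).toLinearMap

/-!
Let `D = π₁ - π₋₁` be the degree derivation, acting as `k` on `L_k`. Since `D` is a derivation
and `I` an ideal, `D` maps `[I, I]` into `I`; hence for `a ∈ [I, I]` both `a + D a = a₀ + 2 a₁` and
`a - D a = a₀ + 2 a₋₁` lie in `I`. For `a, b ∈ [I, I]` the identity
`π₁ [a, b] = [a₀, b₁] + [a₁, b₀] = [a₀ + 2 a₁, b₁] - [b₀ + 2 b₁, a₁]` (using `[a₁, b₁] = 0`)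
then shows `π₁ J ⊆ I`, and likewise `π₋₁ J ⊆ I`; as `J ⊆ I`, we get `Ĩ ⊆ I`.
Since `π₀ = 1 - π₋₁ - π₁`, `Ĩ` is the sum of all `π_k J`, which is graded, and it is an ideal
because `π_{i+k} [z, j] = [z, π_k j]` for `z ∈ L_i`.
-/

open DirectSum

section GradedModule

variable {Φ L : Type*} [CommRing Φ] [AddCommGroup L] [Module Φ L]
  (𝒜 : ℤ → Submodule Φ L) [Decomposition 𝒜]

lemma gproj_apply (i : ℤ) (x : L) : gproj 𝒜 i x = (decompose 𝒜 x i : L) := rfl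

lemma gproj_mem (i : ℤ) (x : L) : gproj 𝒜 i x ∈ 𝒜 i :=
  (decompose 𝒜 x i).2

lemma gproj_of_mem_same {i : ℤ} {x : L} (hx : x ∈ 𝒜 i) : gproj 𝒜 i x = x :=
  decompose_of_mem_same 𝒜 hx

lemma gproj_of_mem_ne {i j : ℤ} {x : L} (hx : x ∈ 𝒜 i) (hij : i ≠ j) : gproj 𝒜 j x = 0 :=
  decompose_of_mem_ne 𝒜 hx hij

lemma gproj_map_of_mem_grade {k : ℤ} (f : L →ₗ[Φ] L) (hf : ∀ i, ∀ x ∈ 𝒜 i, f x ∈ 𝒜 (k + i))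
    (m : ℤ) (x : L) : gproj 𝒜 (k + m) (f x) = f (gproj 𝒜 m x) := by
  induction x using Decomposition.inductionOn 𝒜 with
  | zero => simp
  | @homogeneous i x =>
    by_cases h : i = m
    · subst h
      rw [gproj_of_mem_same 𝒜 x.2, gproj_of_mem_same 𝒜 (hf i x x.2)]
    · rw [gproj_of_mem_ne 𝒜 x.2 h, gproj_of_mem_ne 𝒜 (hf i x x.2) (by omega), map_zero]
  | add x y hx hy => simp only [map_add, hx, hy]

lemma isHomogeneous_iSup_map_gproj (N : Submodule Φ L) :
    SetLike.IsHomogeneous 𝒜 (⨆ k, N.map (gproj 𝒜 k)) := by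
  intro i y hy
  rw [← gproj_apply]
  refine Submodule.iSup_induction _ (motive := fun y => gproj 𝒜 i y ∈ _) hy ?_ (by simp) ?_
  · rintro k _ ⟨x, hx, rfl⟩
    by_cases h : k = i
    · subst h
      rw [gproj_of_mem_same 𝒜 (gproj_mem 𝒜 k x)]
      exact Submodule.mem_iSup_of_mem k ⟨x, hx, rfl⟩
    · rw [gproj_of_mem_ne 𝒜 (gproj_mem 𝒜 k x) h]
      exact zero_mem _
  · intro y z hy hz
    rw [map_add]
    exact add_mem hy hz

variable {𝒜}

lemma gproj_eq_zero (htriv : ∀ k : ℤ, 1 < |k| → 𝒜 k = ⊥) {k : ℤ} (hk : 1 < |k|) (x : L) :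
    gproj 𝒜 k x = 0 := by
  simpa [htriv k hk] using gproj_mem 𝒜 k x

lemma gproj_add_gproj_add_gproj (htriv : ∀ k : ℤ, 1 < |k| → 𝒜 k = ⊥) (x : L) :
    gproj 𝒜 (-1) x + gproj 𝒜 0 x + gproj 𝒜 1 x = x := by
  induction x using Decomposition.inductionOn 𝒜 with
  | zero => simp
  | @homogeneous i x =>
    rcases le_or_gt |i| 1 with hi | hi
    · rcases Int.abs_le_one_iff.mp hi with rfl | rfl | rfl <;>
        simp [gproj_of_mem_same 𝒜 x.2, gproj_of_mem_ne 𝒜 x.2]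
    · have hx0 : (x : L) = 0 := by simpa [htriv i hi] using x.2
      simp [hx0]
  | add x y hx hy =>
    simp only [map_add]
    conv_rhs => rw [← hx, ← hy]
    abel

lemma iSup_map_gproj_eq (htriv : ∀ k : ℤ, 1 < |k| → 𝒜 k = ⊥) (N : Submodule Φ L) :
    ⨆ k, N.map (gproj 𝒜 k) = N ⊔ N.map (gproj 𝒜 (-1)) ⊔ N.map (gproj 𝒜 1) := by
  apply le_antisymm
  · refine iSup_le fun k => ?_
    rcases le_or_gt |k| 1 with hk | hk
    · rcases Int.abs_le_one_iff.mp hk with rfl | rfl | rfl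
      · rintro _ ⟨x, hx, rfl⟩
        have h0 : gproj 𝒜 0 x = x - gproj 𝒜 (-1) x - gproj 𝒜 1 x := by
          rw [sub_sub, eq_sub_iff_add_eq']
          convert gproj_add_gproj_add_gproj htriv x using 1
          abel
        rw [h0]
        exact sub_mem (sub_mem (Submodule.mem_sup_left (Submodule.mem_sup_left hx))
          (Submodule.mem_sup_left (Submodule.mem_sup_right ⟨x, hx, rfl⟩)))
          (Submodule.mem_sup_right ⟨x, hx, rfl⟩)
      · exact le_sup_right
      · exact le_sup_right.trans le_sup_left
    · rintro _ ⟨x, -, rfl⟩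
      rw [gproj_eq_zero htriv hk]
      exact zero_mem _
  · refine sup_le (sup_le ?_ (le_iSup_of_le (-1) le_rfl)) (le_iSup_of_le 1 le_rfl)
    intro x hx
    rw [← gproj_add_gproj_add_gproj htriv x]
    exact add_mem (add_mem (Submodule.mem_iSup_of_mem (-1) ⟨x, hx, rfl⟩)
      (Submodule.mem_iSup_of_mem 0 ⟨x, hx, rfl⟩)) (Submodule.mem_iSup_of_mem 1 ⟨x, hx, rfl⟩)

end GradedModule

lemma LieSubmodule.apply_mem_of_mem_lie {R L M : Type*} [CommRing R] [LieRing L]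
    [LieAlgebra R L] [AddCommGroup M] [Module R M] [LieRingModule L M] [LieModule R L M]
    {I : LieIdeal R L} {N : LieSubmodule R L M} (f : M →ₗ[R] M) {P : Submodule R M}
    (h : ∀ x ∈ I, ∀ m ∈ N, f ⁅x, m⁆ ∈ P) {m : M} (hm : m ∈ ⁅I, N⁆) : f m ∈ P := by
  rw [← LieSubmodule.mem_toSubmodule, LieSubmodule.lieIdeal_oper_eq_linear_span'] at hm
  refine (Submodule.span_le (p := P.comap f)).mpr ?_ hm
  rintro _ ⟨x, hx, n, hn, rfl⟩
  exact h x hx n hn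

lemma LieDerivation.apply_mem_of_mem_lie_self {R L : Type*} [CommRing R] [LieRing L]
    [LieAlgebra R L] (D : LieDerivation R L L) {I : LieIdeal R L} {a : L} (ha : a ∈ ⁅I, I⁆) :
    D a ∈ I :=
  LieSubmodule.apply_mem_of_mem_lie (D : L →ₗ[R] L) (fun x hx y hy => by
    rw [LieDerivation.coeFn_coe, LieDerivation.apply_lie_eq_sub]
    exact sub_mem (lie_mem_left R L I _ _ hx) (lie_mem_left R L I _ _ hy)) ha

section GradedLie

variable {Φ L : Type*} [CommRing Φ] [LieRing L] [LieAlgebra Φ L]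
  {𝒜 : ℤ → Submodule Φ L} [Decomposition 𝒜]

def IsLieGrading (𝒜 : ℤ → Submodule Φ L) : Prop :=
  ∀ (i j : ℤ) (x y : L), x ∈ 𝒜 i → y ∈ 𝒜 j → ⁅x, y⁆ ∈ 𝒜 (i + j)

lemma gproj_lie_of_mem (hlie : IsLieGrading 𝒜) {k : ℤ} {z : L} (hz : z ∈ 𝒜 k) (m : ℤ) (w : L) :
    gproj 𝒜 (k + m) ⁅z, w⁆ = ⁅z, gproj 𝒜 m w⁆ :=
  gproj_map_of_mem_grade 𝒜 (LieAlgebra.ad Φ L z) (fun i _ hx => hlie k i _ _ hz hx) m w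

lemma lie_mem_iSup_map_gproj (hlie : IsLieGrading 𝒜) (J : LieIdeal Φ L) (z : L) {y : L}
    (hy : y ∈ ⨆ k, J.toSubmodule.map (gproj 𝒜 k)) :
    ⁅z, y⁆ ∈ ⨆ k, J.toSubmodule.map (gproj 𝒜 k) := by
  refine Submodule.iSup_induction _ (motive := fun y => ⁅z, y⁆ ∈ _) hy ?_ (by simp) ?_
  · rintro k _ ⟨j, hj, rfl⟩
    induction z using Decomposition.inductionOn 𝒜 with
    | zero => simp
    | @homogeneous i z =>
      rw [← gproj_lie_of_mem hlie z.2]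
      exact Submodule.mem_iSup_of_mem (i + k) ⟨_, J.lie_mem hj, rfl⟩
    | add z z' hz hz' => rw [add_lie]; exact add_mem hz hz'
  · intro y y' hy hy'
    rw [lie_add]
    exact add_mem hy hy'

lemma lie_gproj_gproj_eq_zero (hlie : IsLieGrading 𝒜) (htriv : ∀ k : ℤ, 1 < |k| → 𝒜 k = ⊥)
    {i j : ℤ} (hij : 1 < |i + j|) (x y : L) :
    ⁅gproj 𝒜 i x, gproj 𝒜 j y⁆ = 0 := by
  simpa [htriv _ hij] using hlie i j _ _ (gproj_mem 𝒜 i x) (gproj_mem 𝒜 j y)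

lemma gproj_lie_of_abs_eq_one (hlie : IsLieGrading 𝒜) (htriv : ∀ k : ℤ, 1 < |k| → 𝒜 k = ⊥)
    {ε : ℤ} (hε : |ε| = 1) (x y : L) :
    gproj 𝒜 ε ⁅x, y⁆ = ⁅gproj 𝒜 0 x, gproj 𝒜 ε y⁆ + ⁅gproj 𝒜 ε x, gproj 𝒜 0 y⁆ := by
  have h (i : ℤ) : gproj 𝒜 ε ⁅gproj 𝒜 i x, y⁆ = ⁅gproj 𝒜 i x, gproj 𝒜 (ε - i) y⁆ := by
    simpa using gproj_lie_of_mem hlie (gproj_mem 𝒜 i x) (ε - i) y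
  conv_lhs => rw [← gproj_add_gproj_add_gproj htriv x]
  rw [add_lie, add_lie, map_add, map_add, h, h, h]
  rcases (abs_eq zero_le_one).mp hε with rfl | rfl
  · simp [gproj_eq_zero htriv (show 1 < |(2 : ℤ)| by norm_num)]
  · simp [gproj_eq_zero htriv (show 1 < |(-2 : ℤ)| by norm_num)]
    exact add_comm _ _

lemma gproj_one_sub_gproj_neg_one_of_mem (htriv : ∀ k : ℤ, 1 < |k| → 𝒜 k = ⊥) {k : ℤ} {x : L}
    (hx : x ∈ 𝒜 k) : (gproj 𝒜 1 - gproj 𝒜 (-1)) x = k • x := by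
  rw [LinearMap.sub_apply]
  rcases le_or_gt |k| 1 with hk | hk
  · rcases Int.abs_le_one_iff.mp hk with rfl | rfl | rfl <;>
      simp [gproj_of_mem_same 𝒜 hx, gproj_of_mem_ne 𝒜 hx]
  · have hx0 : x = 0 := by simpa [htriv k hk] using hx
    simp [hx0]

lemma gproj_one_sub_gproj_neg_one_lie (hlie : IsLieGrading 𝒜)
    (htriv : ∀ k : ℤ, 1 < |k| → 𝒜 k = ⊥) (x y : L) :
    (gproj 𝒜 1 - gproj 𝒜 (-1)) ⁅x, y⁆ =
      ⁅x, (gproj 𝒜 1 - gproj 𝒜 (-1)) y⁆ - ⁅y, (gproj 𝒜 1 - gproj 𝒜 (-1)) x⁆ := by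
  induction x using Decomposition.inductionOn 𝒜 with
  | zero => simp
  | @homogeneous i x =>
    induction y using Decomposition.inductionOn 𝒜 with
    | zero => simp
    | @homogeneous j y =>
      rw [gproj_one_sub_gproj_neg_one_of_mem htriv (hlie i j _ _ x.2 y.2),
        gproj_one_sub_gproj_neg_one_of_mem htriv x.2,
        gproj_one_sub_gproj_neg_one_of_mem htriv y.2, lie_zsmul, lie_zsmul,
        ← lie_skew (y : L)]
      module
    | add y y' hy hy' =>
      rw [lie_add, map_add, hy, hy', map_add, lie_add, add_lie]
      abel
  | add x x' hx hx' =>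
    rw [add_lie, map_add, hx, hx', map_add, lie_add, add_lie]
    abel

noncomputable def gradingDerivation (hlie : IsLieGrading 𝒜)
    (htriv : ∀ k : ℤ, 1 < |k| → 𝒜 k = ⊥) : LieDerivation Φ L L where
  toLinearMap := gproj 𝒜 1 - gproj 𝒜 (-1)
  leibniz' := gproj_one_sub_gproj_neg_one_lie hlie htriv

lemma gradingDerivation_apply (hlie : IsLieGrading 𝒜) (htriv : ∀ k : ℤ, 1 < |k| → 𝒜 k = ⊥)
    (x : L) : gradingDerivation hlie htriv x = gproj 𝒜 1 x - gproj 𝒜 (-1) x :=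
  rfl

lemma gproj_zero_add_two_smul_gproj_mem (hlie : IsLieGrading 𝒜)
    (htriv : ∀ k : ℤ, 1 < |k| → 𝒜 k = ⊥) {I : LieIdeal Φ L} {ε : ℤ} (hε : |ε| = 1) {a : L}
    (ha : a ∈ ⁅I, I⁆) : gproj 𝒜 0 a + 2 • gproj 𝒜 ε a ∈ I := by
  have hD := (gradingDerivation hlie htriv).apply_mem_of_mem_lie_self ha
  have haI : a ∈ I := LieSubmodule.lie_le_left I I ha
  have hsum := gproj_add_gproj_add_gproj htriv a
  rw [gradingDerivation_apply] at hD
  rcases (abs_eq zero_le_one).mp hε with rfl | rfl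
  · convert add_mem haI hD using 1
    linear_combination (norm := module) hsum
  · convert sub_mem haI hD using 1
    linear_combination (norm := module) hsum

lemma gproj_mem_of_mem_lie_lie (hlie : IsLieGrading 𝒜) (htriv : ∀ k : ℤ, 1 < |k| → 𝒜 k = ⊥)
    {I : LieIdeal Φ L} {ε : ℤ} (hε : |ε| = 1) {b : L} (hb : b ∈ ⁅⁅I, I⁆, ⁅I, I⁆⁆) :
    gproj 𝒜 ε b ∈ I := by
  refine LieSubmodule.apply_mem_of_mem_lie (gproj 𝒜 ε) (fun a ha a' ha' => ?_) hb
  have hzero : ⁅gproj 𝒜 ε a, gproj 𝒜 ε a'⁆ = 0 :=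
    lie_gproj_gproj_eq_zero hlie htriv (by rw [← two_mul, abs_mul, hε]; norm_num) a a'
  have key : gproj 𝒜 ε ⁅a, a'⁆ = ⁅gproj 𝒜 0 a + 2 • gproj 𝒜 ε a, gproj 𝒜 ε a'⁆ -
      ⁅gproj 𝒜 0 a' + 2 • gproj 𝒜 ε a', gproj 𝒜 ε a⁆ := by
    rw [gproj_lie_of_abs_eq_one hlie htriv hε, add_lie, add_lie, nsmul_lie, nsmul_lie, hzero,
      ← lie_skew (gproj 𝒜 ε a'), hzero, ← lie_skew (gproj 𝒜 ε a) (gproj 𝒜 0 a'), neg_zero,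
      smul_zero, add_zero, add_zero, sub_eq_add_neg]
  rw [key]
  exact sub_mem (lie_mem_left Φ L I _ _ (gproj_zero_add_two_smul_gproj_mem hlie htriv hε ha))
    (lie_mem_left Φ L I _ _ (gproj_zero_add_two_smul_gproj_mem hlie htriv hε ha'))

end GradedLie

/-- Let `L = L₋₁ ⊕ L₀ ⊕ L₁` be a 3-graded Lie algebra and `I`
an ideal of `L`.  Let `J = ⁅⁅I, I⁆, ⁅I, I⁆⁆` and `Ĩ = J + π₋₁(J) + π₁(J)`.
Then `Ĩ` is a graded ideal of `L` contained in `I`. -/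
theorem tilde_ideal_is_graded_ideal_contained_in_ideal
    {Φ : Type*} [CommRing Φ] {L : Type*} [LieRing L] [LieAlgebra Φ L]
    (𝒜 : ℤ → Submodule Φ L) [DirectSum.Decomposition 𝒜]
    (hbracket : ∀ (i j : ℤ) (x y : L), x ∈ 𝒜 i → y ∈ 𝒜 j → ⁅x, y⁆ ∈ 𝒜 (i + j))
    (htriv : ∀ k : ℤ, 1 < |k| → 𝒜 k = ⊥)
    (I : LieIdeal Φ L)
    (J : LieIdeal Φ L) (hJ : J = ⁅(⁅I, I⁆ : LieIdeal Φ L), (⁅I, I⁆ : LieIdeal Φ L)⁆)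
    (Itilde : Submodule Φ L)
    (hItilde : Itilde = J.toSubmodule ⊔ J.toSubmodule.map (gproj 𝒜 (-1)) ⊔
        J.toSubmodule.map (gproj 𝒜 1)) :
    (∀ x : L, ∀ y ∈ Itilde, ⁅x, y⁆ ∈ Itilde) ∧
    (∀ y ∈ Itilde, ∀ k : ℤ, (DirectSum.decompose 𝒜 y k : L) ∈ Itilde) ∧
    Itilde ≤ I.toSubmodule := by
  rw [← iSup_map_gproj_eq htriv] at hItilde
  subst hItilde
  refine ⟨fun x y hy => lie_mem_iSup_map_gproj hbracket J x hy,
    fun y hy k => isHomogeneous_iSup_map_gproj 𝒜 _ k hy, ?_⟩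
  rw [iSup_map_gproj_eq htriv]
  subst hJ
  refine sup_le (sup_le ?_ ?_) ?_
  · exact (LieSubmodule.lie_le_left _ _).trans (LieSubmodule.lie_le_left I I)
  · exact Submodule.map_le_iff_le_comap.mpr fun b hb =>
      gproj_mem_of_mem_lie_lie hbracket htriv (by norm_num) hb
  · exact Submodule.map_le_iff_le_comap.mpr fun b hb =>
      gproj_mem_of_mem_lie_lie hbracket htriv (by norm_num) hb
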